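/- arXiv:2008.10288 — 2 statements merged into one kernel-verified Lean document; each statement's English description precedes it below -/
import Mathlib

section
/- With η_{αβ} the Kähler 2-forms of the compositions of the left quaternionic Pauli matrices on ℝ⁸, the Cayley calibration satisfies Φ_{Spin(7)} = (1/4)[η₁₂² + η₁₃² + η₂₄² + η₃₄² - η₂₃² - η₁₄² - η₁₅² - η₂₅² - η₃₅² - η₄₅²]. -/
noncomputable section

/-- The exterior algebra of (the dual of) ℝ⁸; forms on ℝ⁸. -/
abbrev Ext8 := ExteriorAlgebra ℝ (Fin 8 → ℝ)

/-- The coordinate 1-forms `dx₁, …, dx₈` (0-indexed). -/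
def dx (a : Fin 8) : Ext8 := ExteriorAlgebra.ι ℝ (Pi.single a 1)

/-- `dx_a ∧ dx_b`. -/
def w2 (a b : Fin 8) : Ext8 := dx a * dx b

/-- `dx_a ∧ dx_b ∧ dx_c ∧ dx_d`. -/
def w4 (a b c d : Fin 8) : Ext8 := dx a * dx b * dx c * dx d

/- The ten Kähler 2-forms η_{αβ} of the compositions of the left quaternionic Pauli
matrices, written with 0-indexed coordinates. -/
def η12 : Ext8 := -w2 0 1 - w2 2 3 + w2 4 5 + w2 6 7
def η13 : Ext8 := -w2 0 2 + w2 1 3 + w2 4 6 - w2 5 7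
def η14 : Ext8 := -w2 0 3 - w2 1 2 + w2 4 7 + w2 5 6
def η23 : Ext8 := w2 0 3 + w2 1 2 + w2 4 7 + w2 5 6
def η24 : Ext8 := -w2 0 2 + w2 1 3 - w2 4 6 + w2 5 7
def η34 : Ext8 := w2 0 1 + w2 2 3 + w2 4 5 + w2 6 7
def η15 : Ext8 := -w2 0 4 - w2 1 5 - w2 2 6 - w2 3 7
def η25 : Ext8 := -w2 0 5 + w2 1 4 - w2 2 7 + w2 3 6
def η35 : Ext8 := -w2 0 6 + w2 1 7 + w2 2 4 - w2 3 5
def η45 : Ext8 := -w2 0 7 - w2 1 6 + w2 2 5 + w2 3 4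

/-- The Cayley calibration
`Φ_{Spin(7)} = dx₁₂₃₄+dx₁₂₅₆+dx₁₃₅₇+dx₁₃₆₈-dx₁₂₇₈-dx₁₄₆₇+dx₁₄₅₈ + ⋆(same)`. -/
def ΦSpin7 : Ext8 :=
  w4 0 1 2 3 + w4 0 1 4 5 + w4 0 2 4 6 + w4 0 2 5 7 - w4 0 1 6 7 - w4 0 3 5 6 + w4 0 3 4 7
  + w4 4 5 6 7 + w4 2 3 6 7 + w4 1 3 5 7 + w4 1 3 4 6 - w4 2 3 4 5 - w4 1 2 4 7 + w4 1 2 5 6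


lemma dx_sq (a : Fin 8) : dx a * dx a = 0 := ExteriorAlgebra.ι_sq_zero _

lemma dx_sq' (a : Fin 8) (x : Ext8) : dx a * (dx a * x) = 0 := by
  rw [← mul_assoc, dx_sq, zero_mul]

lemma dx_swap (a b : Fin 8) (h : b < a) : dx a * dx b = -(dx b * dx a) := by
  unfold dx
  exact eq_neg_of_add_eq_zero_left
    (ExteriorAlgebra.ι_add_mul_swap (R := ℝ) (M := Fin 8 → ℝ) (Pi.single a 1) (Pi.single b 1))

lemma dx_swap' (a b : Fin 8) (h : b < a) (x : Ext8) :
    dx a * (dx b * x) = -(dx b * (dx a * x)) := by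
  rw [← mul_assoc, dx_swap a b h, neg_mul, mul_assoc]

/-- `Φ_{Spin(7)} = (1/4)[η₁₂²+η₁₃²+η₂₄²+η₃₄²-η₂₃²-η₁₄²-η₁₅²-η₂₅²-η₃₅²-η₄₅²]`. -/
theorem cayley_calibration_from_eta :
    ΦSpin7 = (1/4 : ℝ) •
      (η12^2 + η13^2 + η24^2 + η34^2 - η23^2 - η14^2 - η15^2 - η25^2 - η35^2 - η45^2) := by
  unfold ΦSpin7 η12 η13 η14 η23 η24 η34 η15 η25 η35 η45 w4 w2
  simp only [pow_two, mul_add, add_mul, mul_sub, sub_mul, mul_neg, neg_mul, neg_neg, mul_assoc]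
  simp (disch := decide) only [dx_sq, dx_sq', dx_swap, dx_swap', mul_neg, neg_neg,
    mul_zero, zero_mul, neg_zero]
  module
end
end

section
/- Any 4-plane Q ⊂ ℝ¹⁶ = 𝕆 ⊕ 𝕆' whose projections to both summands are 2-dimensional can be written in the canonical form Q = [e₁ ∧ (R_i e₁ cos θ + e₂ sin θ)] ⊕ [e₁' ∧ (R_i e₁' cos θ' + e₂' sin θ')] for suitable orthonormal pairs e₁,e₂ ∈ 𝕆 and e₁',e₂' ∈ 𝕆', a common complex structure R_i (right multiplication by a unit imaginary octonion), and angles 0 ≤ θ ≤ π/2, θ ≤ θ' ≤ π-θ. -/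
/-!
The dimensions of the two projections of `Q` add up to `dim Q`, so `Q` is the product `P ⊕ P'` of
its projections, two 2-planes. An orthonormal basis `f₁, f₂` of `P` gives the unit imaginary
octonion `u = f̄₁ f₂`, and `f₁ u = f₂` by alternativity: `P` is a complex line for `R_u`, so
`θ = 0`. For an orthonormal basis `g₁, g₂` of `P'`, the vector `g₁ u` is a unit vector orthogonal
to `g₁`; taking `θ'` to be the angle between `g₁ u` and `g₂` and splitting `g₂` along `g₁ u`
yields the second unit vector `e₂'`, which stays orthogonal to `g₁`.
-/

noncomputable section

open Quaternion

/-- The octonions via Cayley–Dickson on ℍ; `h₁ + h₂e ↔ (h₁,h₂)`. -/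
abbrev Oct := ℍ[ℝ] × ℍ[ℝ]

/-- Cayley–Dickson multiplication. -/
def omul (x y : Oct) : Oct :=
  (x.1 * y.1 - star y.2 * x.2, x.2 * star y.1 + y.2 * x.1)

def qi : ℍ[ℝ] := ⟨0,1,0,0⟩
def qj : ℍ[ℝ] := ⟨0,0,1,0⟩
def qk : ℍ[ℝ] := ⟨0,0,0,1⟩

/-- The standard orthonormal basis `1,i,j,k,e,f,g,h` of 𝕆 ≅ ℝ⁸. -/
def oe : Fin 8 → Oct
  | 0 => (1, 0) | 1 => (qi, 0) | 2 => (qj, 0) | 3 => (qk, 0)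
  | 4 => (0, 1) | 5 => (0, qi) | 6 => (0, qj) | 7 => (0, qk)

/-- The Euclidean inner product on 𝕆 ≅ ℝ⁸. -/
def ip8 (x y : Oct) : ℝ := (x.1 * star y.1).re + (x.2 * star y.2).re

/-- The Euclidean inner product on 𝕆² ≅ ℝ¹⁶. -/
def ip16 (x y : Oct × Oct) : ℝ := ip8 x.1 y.1 + ip8 x.2 y.2

/-- The nine octonionic Pauli matrices on 𝕆² ≅ ℝ¹⁶:
`I₁ = [[0,Id],[Id,0]]`, `Iₐ = [[0,-R_u],[R_u,0]]` for `u = i,j,k,e,f,g,h` (a = 2,…,8),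
`I₉ = [[Id,0],[0,-Id]]`, where `R_u` is right octonion multiplication by `u`. -/
def oPauli : Fin 9 → Oct × Oct → Oct × Oct
  | 0 => fun x => (x.2, x.1)
  | 1 => fun x => (-(omul x.2 (oe 1)), omul x.1 (oe 1))
  | 2 => fun x => (-(omul x.2 (oe 2)), omul x.1 (oe 2))
  | 3 => fun x => (-(omul x.2 (oe 3)), omul x.1 (oe 3))
  | 4 => fun x => (-(omul x.2 (oe 4)), omul x.1 (oe 4))
  | 5 => fun x => (-(omul x.2 (oe 5)), omul x.1 (oe 5))
  | 6 => fun x => (-(omul x.2 (oe 6)), omul x.1 (oe 6))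
  | 7 => fun x => (-(omul x.2 (oe 7)), omul x.1 (oe 7))
  | 8 => fun x => (x.1, -x.2)

open Real
open Module

theorem Submodule.finrank_prod {K M N : Type*} [DivisionRing K] [AddCommGroup M] [Module K M]
    [AddCommGroup N] [Module K N] (p : Submodule K M) (q : Submodule K N)
    [FiniteDimensional K p] [FiniteDimensional K q] :
    finrank K (p.prod q) = finrank K p + finrank K q := by
  have hinj : Function.Injective (p.subtype.prodMap q.subtype) :=
    Prod.map_injective.2 ⟨p.injective_subtype, q.injective_subtype⟩
  have := LinearMap.finrank_range_of_inj hinj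
  rwa [LinearMap.range_prodMap, p.range_subtype, q.range_subtype, Module.finrank_prod] at this

theorem Submodule.eq_prod_map_fst_map_snd {K M N : Type*} [DivisionRing K] [AddCommGroup M]
    [Module K M] [AddCommGroup N] [Module K N] [FiniteDimensional K M] [FiniteDimensional K N]
    (Q : Submodule K (M × N))
    (h : finrank K (Q.map (LinearMap.fst K M N)) + finrank K (Q.map (LinearMap.snd K M N)) =
      finrank K Q) :
    Q = (Q.map (LinearMap.fst K M N)).prod (Q.map (LinearMap.snd K M N)) := by
  refine Submodule.eq_of_le_of_finrank_eq (fun x hx => ⟨⟨x, hx, rfl⟩, ⟨x, hx, rfl⟩⟩) ?_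
  rw [Submodule.finrank_prod, h]

theorem Submodule.exists_orthonormal_pair_span_eq {𝕜 E : Type*} [RCLike 𝕜]
    [NormedAddCommGroup E] [InnerProductSpace 𝕜 E] (W : Submodule 𝕜 E) (h : finrank 𝕜 W = 2) :
    ∃ f₁ f₂ : E, ‖f₁‖ = 1 ∧ ‖f₂‖ = 1 ∧ inner 𝕜 f₁ f₂ = 0 ∧ W = span 𝕜 {f₁, f₂} := by
  have : FiniteDimensional 𝕜 W := Module.finite_of_finrank_eq_succ h
  let b := (stdOrthonormalBasis 𝕜 W).reindex (finCongr h)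
  refine ⟨b 0, b 1, b.orthonormal.1 0, b.orthonormal.1 1, b.orthonormal.2 zero_ne_one, ?_⟩
  have hspan := congrArg (Submodule.map W.subtype) b.toBasis.span_eq
  rw [Submodule.map_span, Submodule.map_subtype_top, ← Set.range_comp, b.coe_toBasis] at hspan
  refine hspan.symm.trans (congrArg _ ?_)
  ext x
  simp [Fin.exists_fin_two, eq_comm]

section Angle

open InnerProductGeometry RealInnerProductSpace

variable {E : Type*} [NormedAddCommGroup E] [InnerProductSpace ℝ E]

theorem exists_eq_cos_angle_smul_add_sin_angle_smul {g y : E} (hg : ‖g‖ = 1) (hy : ‖y‖ = 1) :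
    ∃ e : E, ‖e‖ = 1 ∧ e ∈ Submodule.span ℝ {g, y} ∧
      y = cos (angle g y) • g + sin (angle g y) • e := by
  set r := y - ⟪g, y⟫ • g with hr
  have hcos : cos (angle g y) = ⟪g, y⟫ := by simp [cos_angle, hg, hy]
  have hsin : sin (angle g y) = ‖r‖ := by
    have hsq : ‖r‖ ^ 2 = sin (angle g y) ^ 2 := by
      rw [sin_sq, hcos, hr, ← real_inner_self_eq_norm_sq]
      simp only [inner_sub_left, inner_sub_right, real_inner_smul_left, real_inner_smul_right,
        real_inner_self_eq_norm_sq, norm_smul, Real.norm_eq_abs, mul_pow, sq_abs, hg, hy,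
        real_inner_comm g y]
      ring
    exact (sq_eq_sq₀ (sin_angle_nonneg g y) (norm_nonneg r)).1 hsq.symm
  have hy_eq : y = cos (angle g y) • g + r := by rw [hcos, hr]; abel
  by_cases hr0 : r = 0
  · refine ⟨g, hg, Submodule.subset_span (by simp), ?_⟩
    rw [hsin, hr0, norm_zero, zero_smul]
    rwa [hr0] at hy_eq
  · have hr_mem : r ∈ Submodule.span ℝ {g, y} :=
      Submodule.sub_mem _ (Submodule.subset_span (by simp))
        (Submodule.smul_mem _ _ (Submodule.subset_span (by simp)))
    refine ⟨‖r‖⁻¹ • r, norm_smul_inv_norm hr0, Submodule.smul_mem _ _ hr_mem, ?_⟩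
    rwa [hsin, smul_inv_smul₀ (norm_ne_zero_iff.2 hr0)]

end Angle

def oconj (x : Oct) : Oct := (star x.1, -x.2)

lemma ip8_eq_inner (x y : Oct) : ip8 x y = inner ℝ (WithLp.toLp 2 x) (WithLp.toLp 2 y) := rfl

lemma ip8_self_eq_one_iff (x : Oct) : ip8 x x = 1 ↔ ‖WithLp.toLp 2 x‖ = 1 := by
  rw [ip8_eq_inner, real_inner_self_eq_norm_sq,
    pow_eq_one_iff_of_nonneg (norm_nonneg _) two_ne_zero]

lemma ip8_omul_self (x y : Oct) : ip8 (omul x y) (omul x y) = ip8 x x * ip8 y y := by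
  simp [ip8, omul]; ring

lemma ip8_oconj_self (x : Oct) : ip8 (oconj x) (oconj x) = ip8 x x := by
  simp [ip8, oconj]

lemma re_omul_oconj (x y : Oct) : (omul (oconj x) y).1.re = ip8 x y := by
  simp [ip8, omul, oconj]; ring

lemma omul_omul_oconj (x y : Oct) : omul x (omul (oconj x) y) = ip8 x x • y := by
  simp [ip8, omul, oconj, Prod.ext_iff, Quaternion.ext_iff]
  refine ⟨⟨?_, ?_, ?_, ?_⟩, ?_, ?_, ?_, ?_⟩ <;> ring

lemma ip8_self_omul (x u : Oct) : ip8 x (omul x u) = u.1.re * ip8 x x := by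
  simp [ip8, omul]; ring

lemma exists_ip8_orthonormal_span_eq (W : Submodule ℝ Oct) (h : finrank ℝ W = 2) :
    ∃ f₁ f₂ : Oct, ip8 f₁ f₁ = 1 ∧ ip8 f₂ f₂ = 1 ∧ ip8 f₁ f₂ = 0 ∧
      W = Submodule.span ℝ {f₁, f₂} := by
  let L := WithLp.linearEquiv 2 ℝ Oct
  have hW : finrank ℝ (W.map (L.symm : Oct →ₗ[ℝ] WithLp 2 Oct)) = 2 := by
    rwa [LinearEquiv.finrank_map_eq]
  obtain ⟨f₁, f₂, hf₁, hf₂, hf₁₂, hspan⟩ := Submodule.exists_orthonormal_pair_span_eq _ hW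
  refine ⟨f₁.ofLp, f₂.ofLp, (ip8_self_eq_one_iff _).2 (by simpa), (ip8_self_eq_one_iff _).2
    (by simpa), by simpa [ip8_eq_inner] using hf₁₂, ?_⟩
  rw [Submodule.map_symm_eq_iff, Submodule.map_span, Set.image_pair] at hspan
  exact hspan.symm

lemma exists_imaginary_unit_omul_eq {f₁ f₂ : Oct} (hf₁ : ip8 f₁ f₁ = 1) (hf₂ : ip8 f₂ f₂ = 1)
    (hf₁₂ : ip8 f₁ f₂ = 0) : ∃ u : Oct, u.1.re = 0 ∧ ip8 u u = 1 ∧ omul f₁ u = f₂ :=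
  ⟨omul (oconj f₁) f₂, by rw [re_omul_oconj, hf₁₂],
    by rw [ip8_omul_self, ip8_oconj_self, hf₁, hf₂, one_mul],
    by rw [omul_omul_oconj, hf₁, one_smul]⟩

lemma exists_eq_cos_smul_omul_add_sin_smul {g₁ g₂ u : Oct} (hg₁ : ip8 g₁ g₁ = 1)
    (hg₂ : ip8 g₂ g₂ = 1) (hg₁₂ : ip8 g₁ g₂ = 0) (hu_re : u.1.re = 0) (hu : ip8 u u = 1) :
    ∃ (θ : ℝ) (e : Oct), 0 ≤ θ ∧ θ ≤ π ∧ ip8 e e = 1 ∧ ip8 g₁ e = 0 ∧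
      g₂ = cos θ • omul g₁ u + sin θ • e := by
  have hg : ip8 (omul g₁ u) (omul g₁ u) = 1 := by rw [ip8_omul_self, hg₁, hu, one_mul]
  have hg₁g : ip8 g₁ (omul g₁ u) = 0 := by rw [ip8_self_omul, hu_re, zero_mul]
  obtain ⟨e, he, he_mem, hdecomp⟩ := exists_eq_cos_angle_smul_add_sin_angle_smul
    ((ip8_self_eq_one_iff _).1 hg) ((ip8_self_eq_one_iff _).1 hg₂)
  refine ⟨_, e.ofLp, InnerProductGeometry.angle_nonneg _ _,
    InnerProductGeometry.angle_le_pi _ _, (ip8_self_eq_one_iff _).2 (by simpa), ?_,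
    by simpa using congrArg WithLp.ofLp hdecomp⟩
  obtain ⟨a, b, rfl⟩ := Submodule.mem_span_pair.1 he_mem
  rw [ip8_eq_inner, WithLp.toLp_ofLp, inner_add_right, real_inner_smul_right,
    real_inner_smul_right, ← ip8_eq_inner, ← ip8_eq_inner, hg₁g, hg₁₂]
  ring

/-- Canonical form for 4-planes of ℝ¹⁶ = 𝕆 ⊕ 𝕆' with two-dimensional projections:
any such 4-plane `Q` is `[e₁ ∧ (R_u e₁ cos θ + e₂ sin θ)] ⊕ [e₁' ∧ (R_u e₁' cos θ' + e₂' sin θ')]`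
for suitable orthonormal pairs `e₁,e₂ ∈ 𝕆` and `e₁',e₂' ∈ 𝕆'`, a common complex structure `R_u`
(right multiplication by a unit imaginary octonion), and angles `0 ≤ θ ≤ π/2`, `θ ≤ θ' ≤ π-θ`. -/
theorem four_plane_canonical_form
    (Q : Submodule ℝ (Oct × Oct))
    (h4 : Module.finrank ℝ Q = 4)
    (hp1 : Module.finrank ℝ (Q.map (LinearMap.fst ℝ Oct Oct)) = 2)
    (hp2 : Module.finrank ℝ (Q.map (LinearMap.snd ℝ Oct Oct)) = 2) :
    ∃ (u e₁ e₂ e₁' e₂' : Oct) (θ θ' : ℝ),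
      u.1.re = 0 ∧ ip8 u u = 1 ∧
      ip8 e₁ e₁ = 1 ∧ ip8 e₂ e₂ = 1 ∧ ip8 e₁ e₂ = 0 ∧
      ip8 e₁' e₁' = 1 ∧ ip8 e₂' e₂' = 1 ∧ ip8 e₁' e₂' = 0 ∧
      0 ≤ θ ∧ θ ≤ π/2 ∧ θ ≤ θ' ∧ θ' ≤ π - θ ∧
      Q = Submodule.span ℝ
        {(e₁, 0), (Real.cos θ • omul e₁ u + Real.sin θ • e₂, 0),
         ((0 : Oct), e₁'), ((0 : Oct), Real.cos θ' • omul e₁' u + Real.sin θ' • e₂')} := by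
  have hQ := Q.eq_prod_map_fst_map_snd (by rw [hp1, hp2, h4])
  obtain ⟨f₁, f₂, hf₁, hf₂, hf₁₂, hP⟩ := exists_ip8_orthonormal_span_eq _ hp1
  obtain ⟨g₁, g₂, hg₁, hg₂, hg₁₂, hP'⟩ := exists_ip8_orthonormal_span_eq _ hp2
  obtain ⟨u, hu_re, hu, hf₁u⟩ := exists_imaginary_unit_omul_eq hf₁ hf₂ hf₁₂
  obtain ⟨θ', e₂', hθ'₀, hθ'π, he₂', hg₁e₂', hg₂⟩ :=
    exists_eq_cos_smul_omul_add_sin_smul hg₁ hg₂ hg₁₂ hu_re hu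
  refine ⟨u, f₁, f₂, g₁, e₂', 0, θ', hu_re, hu, hf₁, hf₂, hf₁₂, hg₁, he₂', hg₁e₂', le_rfl,
    by positivity, hθ'₀, by simpa using hθ'π, ?_⟩
  rw [cos_zero, sin_zero, one_smul, zero_smul, add_zero, hf₁u, ← hg₂, hQ, hP, hP',
    ← LinearMap.span_inl_union_inr]
  congr 1
  simp only [Set.image_pair, LinearMap.inl_apply, LinearMap.inr_apply, Set.insert_union,
    Set.singleton_union]
end
end
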